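/- Let A be an AP-irreducible sign pattern matrix of order n such that A[α,β] contains no + for any two distinct irreducible components α and β of A₊. Then A allows algebraic positivity. -/

import Mathlib

/-!
A real matrix `B` is algebraically positive as soon as it has a positive left eigenvector `v`
for an eigenvalue `μ` whose eigenspace is spanned by a positive vector `u`: then `μ` is a simple
root of the characteristic polynomial `(X - μ) ^ k * g`, and `g(B)` is a nonzero multiple of the
positive rank-one matrix `u vᵀ`.

This is applied to `B = M D⁻¹`, where `M` has sign pattern `A`, equal row and column sums
(a circulation) and positive row sums `r`, and `D = diag r`. Then `1ᵀ B = 1ᵀ`, and `B x = x`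
iff `D⁻¹ x` lies in the kernel of the Laplacian `D - M`, so it remains to make that kernel the
line spanned by `1`.

Circulations come from cycles: if every arc of the digraph of `B_S` lies on a cycle, adding one
signed cycle through each arc gives a circulation with sign pattern `S`. Irreducibility of `B_A`
gives one with pattern `A`. The hypothesis on the components of `A₊` puts every arc of `A₊` on a
cycle of `A₊`, and adding a large multiple of the resulting nonnegative circulation with support
`A₊` makes all row sums positive, since every row of `A` has a `+`. Irreducibility of `A` gives a
nonnegative circulation with the support of `A`, whose Laplacian has kernel `ℝ 1` by the maximum
principle. For a circulation this is equivalent to `det (L + 1 1ᵀ) ≠ 0`, a polynomial condition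
along the segment joining the two circulations; so it holds at points arbitrarily close to the
first one, where the sign pattern and the positive row sums persist.
-/

/-- A real square matrix is algebraically positive if some real polynomial maps it
to an entrywise (strictly) positive matrix. -/
def AlgPos {n : ℕ} (A : Matrix (Fin n) (Fin n) ℝ) : Prop :=
  ∃ p : Polynomial ℝ, ∀ i j, 0 < (Polynomial.aeval A p) i j

/-- Irreducibility of a sign pattern matrix. -/
def SPIrred {n : ℕ} (A : Matrix (Fin n) (Fin n) SignType) : Prop :=
  ∀ S : Set (Fin n), S.Nonempty → S ≠ Set.univ → ∃ i ∈ S, ∃ j ∉ S, A i j ≠ 0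

/-- The sign pattern `B_A = A₊ − (A₋)ᵀ`: its `(i,j)` entry is `+` precisely when
`a_{ij} = +` or `a_{ji} = −`, and `0` otherwise. -/
def BA {n : ℕ} (A : Matrix (Fin n) (Fin n) SignType) : Matrix (Fin n) (Fin n) SignType :=
  Matrix.of fun i j =>
    if A i j = SignType.pos ∨ A j i = SignType.neg then SignType.pos else 0

/-- `A` is AP-irreducible: `A` is irreducible, every row and every column of `A`
contains a `+`, and `B_A` is irreducible. -/
def APIrred {n : ℕ} (A : Matrix (Fin n) (Fin n) SignType) : Prop :=
  SPIrred A ∧ (∀ i, ∃ j, A i j = SignType.pos) ∧ (∀ j, ∃ i, A i j = SignType.pos) ∧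
    SPIrred (BA A)

/-- `i` and `j` lie in the same irreducible component of `A₊`, i.e. they are mutually
reachable in the digraph whose arcs are the `+` entries of `A`. -/
def SameComp {n : ℕ} (A : Matrix (Fin n) (Fin n) SignType) (i j : Fin n) : Prop :=
  Relation.ReflTransGen (fun a b => A a b = SignType.pos) i j ∧
  Relation.ReflTransGen (fun a b => A a b = SignType.pos) j i

open Matrix Polynomial Filter Topology

theorem Filter.Tendsto.eventually_sign_eq {α : Type*} {l : Filter α} {f : α → ℝ} {c : ℝ}
    (h : Tendsto f l (𝓝 c)) (hc : c ≠ 0) : ∀ᶠ x in l, SignType.sign (f x) = SignType.sign c := by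
  rcases hc.lt_or_gt with hc | hc
  · filter_upwards [h.eventually_lt_const hc] with x hx
    rw [sign_neg hx, sign_neg hc]
  · filter_upwards [h.eventually_const_lt hc] with x hx
    rw [sign_pos hx, sign_pos hc]

section EigenvectorCriterion

variable {ι : Type*} [Fintype ι] [DecidableEq ι]

theorem vecMul_aeval_of_vecMul_eq_smul {R : Type*} [CommRing R] {B : Matrix ι ι R} {μ : R}
    {v : ι → R} (hv : v ᵥ* B = μ • v) (p : R[X]) : v ᵥ* aeval B p = p.eval μ • v := by
  induction p using Polynomial.induction_on' with
  | add p q hp hq => rw [map_add, vecMul_add, hp, hq, eval_add, add_smul]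
  | monomial k a =>
    have hpow : v ᵥ* B ^ k = μ ^ k • v := by
      induction k with
      | zero => simp
      | succ k ih => rw [pow_succ, ← vecMul_vecMul, ih, smul_vecMul, hv, smul_smul, pow_succ]
    rw [aeval_monomial, eval_monomial, Algebra.algebraMap_eq_smul_one, smul_mul_assoc, one_mul,
      vecMul_smul, hpow, smul_smul, mul_comm]

theorem exists_eq_smul_of_pow_mulVec_eq_zero {K : Type*} [Field K] {N : Matrix ι ι K}
    {u v : ι → K} (hker : ∀ x, N *ᵥ x = 0 → ∃ c : K, x = c • u) (hvN : v ᵥ* N = 0)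
    (hvu : v ⬝ᵥ u ≠ 0) : ∀ (k : ℕ) (x : ι → K), N ^ k *ᵥ x = 0 → ∃ c : K, x = c • u
  | 0, x, hx => ⟨0, by simpa using hx⟩
  | k + 1, x, hx => by
    obtain ⟨c, hc⟩ := exists_eq_smul_of_pow_mulVec_eq_zero hker hvN hvu k (N *ᵥ x)
      (by rwa [mulVec_mulVec, ← pow_succ])
    have hc0 : c = 0 := by
      have h := congrArg (v ⬝ᵥ ·) hc
      simp only [dotProduct_mulVec, hvN, zero_dotProduct, dotProduct_smul, smul_eq_mul] at h
      exact (mul_eq_zero.1 h.symm).resolve_right hvu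
    exact hker x (by rw [hc, hc0, zero_smul])

theorem exists_aeval_pos_of_eigenvectors {B : Matrix ι ι ℝ} {μ : ℝ} {u v : ι → ℝ}
    (hu : ∀ i, 0 < u i) (hv : ∀ i, 0 < v i) (hvB : v ᵥ* B = μ • v)
    (hker : ∀ x, B *ᵥ x = μ • x → ∃ c : ℝ, x = c • u) :
    ∃ p : ℝ[X], ∀ i j, 0 < aeval B p i j := by
  obtain ⟨g, hfac, hg⟩ := B.charpoly.exists_eq_pow_rootMultiplicity_mul_and_not_dvd
    B.charpoly_monic.ne_zero μ
  have hgμ : g.eval μ ≠ 0 := fun h => hg (dvd_iff_isRoot.2 h)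
  have hvN : v ᵥ* aeval B (X - C μ) = 0 := by
    rw [vecMul_aeval_of_vecMul_eq_smul hvB]; simp
  have hNker : ∀ x, aeval B (X - C μ) *ᵥ x = 0 → ∃ c : ℝ, x = c • u := fun x hx => hker x <| by
    simpa [sub_mulVec, sub_eq_zero, Algebra.algebraMap_eq_smul_one, smul_mulVec] using hx
  have hNg : aeval B (X - C μ) ^ B.charpoly.rootMultiplicity μ * aeval B g = 0 := by
    rw [← map_pow, ← map_mul, ← hfac, aeval_self_charpoly]
  have hvg : v ᵥ* aeval B g = g.eval μ • v := vecMul_aeval_of_vecMul_eq_smul hvB g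
  refine ⟨(v ⬝ᵥ u / g.eval μ) • g, fun i j => ?_⟩
  have hvu : 0 < v ⬝ᵥ u :=
    Finset.sum_pos (fun k _ => mul_pos (hv k) (hu k)) ⟨i, Finset.mem_univ i⟩
  -- the `j`-th column of `g(B)` is killed by `(B - μ) ^ k`, hence is a multiple of `u`
  obtain ⟨c, hc⟩ := exists_eq_smul_of_pow_mulVec_eq_zero hNker hvN hvu.ne' _
    (aeval B g *ᵥ Pi.single j 1) (by rw [mulVec_mulVec, hNg, zero_mulVec])
  have hcu : c * (v ⬝ᵥ u) = g.eval μ * v j := by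
    have h := congrArg (v ⬝ᵥ ·) hc
    simp only [dotProduct_mulVec, hvg, dotProduct_smul, smul_eq_mul, smul_dotProduct] at h
    simpa [mul_comm] using h.symm
  have hentry : aeval B g i j = c * u i := by simpa using congrFun hc i
  have hscale : v ⬝ᵥ u / g.eval μ * c = v j := by
    field_simp
    linarith
  rw [map_smul, Matrix.smul_apply, hentry, smul_eq_mul, ← mul_assoc, hscale]
  exact mul_pos (hv j) (hu i)

end EigenvectorCriterion

section Circulations

variable {ι : Type*}

-- the arcs of the digraph of `B_S = S₊ - (S₋)ᵀ`, as in `BA`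
def BAdj (S : Matrix ι ι SignType) (a b : ι) : Prop :=
  S a b = SignType.pos ∨ S b a = SignType.neg

def signCone (S : Matrix ι ι SignType) : AddSubmonoid (Matrix ι ι ℝ) where
  carrier := {P | ∀ a b, 0 ≤ (S a b : ℝ) * P a b ∧ (S a b = 0 → P a b = 0)}
  add_mem' {P Q} hP hQ a b := ⟨by simpa [mul_add] using add_nonneg (hP a b).1 (hQ a b).1,
    fun h => by simp [(hP a b).2 h, (hQ a b).2 h]⟩
  zero_mem' _ _ := ⟨by simp, fun _ => rfl⟩

theorem smul_single_mem_signCone [DecidableEq ι] (S : Matrix ι ι SignType) (a b : ι) :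
    (S a b : ℝ) • single a b (1 : ℝ) ∈ signCone S := by
  intro x y
  rw [Matrix.smul_apply, single_apply, smul_eq_mul]
  split_ifs with h
  · obtain ⟨rfl, rfl⟩ := h
    exact ⟨by simpa using mul_self_nonneg (S a b : ℝ), fun h0 => by simp [h0]⟩
  · simp

variable [Fintype ι]

def netFlow : Matrix ι ι ℝ →ₗ[ℝ] ι → ℝ where
  toFun M := M *ᵥ 1 - 1 ᵥ* M
  map_add' M N := by simp only [add_mulVec, vecMul_add]; abel
  map_smul' c M := by simp only [smul_mulVec, vecMul_smul, smul_sub, RingHom.id_apply]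

variable [DecidableEq ι]

theorem netFlow_single (a b : ι) (c : ℝ) :
    netFlow (single a b c) = c • (Pi.single a 1 - Pi.single b 1) := by
  ext x
  simp only [netFlow, LinearMap.coe_mk, AddHom.coe_mk, Pi.sub_apply, single_mulVec_eq,
    vecMul, dotProduct, single_apply, Pi.smul_apply, Pi.single_apply, Pi.one_apply, one_mul,
    ite_and, Finset.sum_ite_eq, Finset.mem_univ, if_true, smul_eq_mul]
  obtain rfl | hxb := eq_or_ne x b
  · split_ifs <;> simp
  · simp [hxb, hxb.symm]

theorem exists_mem_signCone_netFlow_eq {S : Matrix ι ι SignType} {i j : ι}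
    (h : Relation.ReflTransGen (BAdj S) i j) :
    ∃ P ∈ signCone S, netFlow P = Pi.single i 1 - Pi.single j 1 := by
  induction h with
  | refl => exact ⟨0, zero_mem _, by simp⟩
  | @tail b c _ hbc ih =>
    obtain ⟨P, hP, hPflow⟩ := ih
    obtain ⟨Q, hQ, hQflow⟩ : ∃ Q ∈ signCone S, netFlow Q = Pi.single b 1 - Pi.single c 1 := by
      rcases hbc with h | h
      · exact ⟨_, smul_single_mem_signCone S b c, by simp [netFlow_single, h]⟩
      · exact ⟨_, smul_single_mem_signCone S c b, by simp [netFlow_single, h]⟩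
    exact ⟨P + Q, add_mem hP hQ, by rw [map_add, hPflow, hQflow]; abel⟩

theorem exists_mem_signCone_netFlow_eq_zero_one_le {S : Matrix ι ι SignType}
    (hcycle : ∀ a b, BAdj S a b → Relation.ReflTransGen (BAdj S) b a) {a b : ι}
    (hab : S a b ≠ 0) : ∃ P ∈ signCone S, netFlow P = 0 ∧ 1 ≤ (S a b : ℝ) * P a b := by
  -- a path of `B_S` closing the arc through the entry `(a, b)` into a cycle
  obtain ⟨Q, hQ, hQflow⟩ :
      ∃ Q ∈ signCone S, netFlow Q = (S a b : ℝ) • (Pi.single b 1 - Pi.single a 1) := by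
    rcases h : S a b
    · exact absurd h hab
    · obtain ⟨Q, hQ, hQflow⟩ := exists_mem_signCone_netFlow_eq (hcycle b a (Or.inr h))
      exact ⟨Q, hQ, by simp [hQflow]⟩
    · obtain ⟨Q, hQ, hQflow⟩ := exists_mem_signCone_netFlow_eq (hcycle a b (Or.inl h))
      exact ⟨Q, hQ, by simp [hQflow]⟩
  have hsq : (S a b : ℝ) * S a b = 1 := by
    rcases h : S a b <;> simp_all
  refine ⟨(S a b : ℝ) • single a b 1 + Q, add_mem (smul_single_mem_signCone S a b) hQ, ?_, ?_⟩
  · rw [map_add, map_smul, netFlow_single, hQflow, one_smul, ← smul_add]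
    simp
  · simp only [Matrix.add_apply, Matrix.smul_apply, single_apply_same, smul_eq_mul, mul_one,
      mul_add, hsq]
    linarith [(hQ a b).1]

theorem exists_netFlow_eq_zero_sign_eq (S : Matrix ι ι SignType)
    (hcycle : ∀ a b, BAdj S a b → Relation.ReflTransGen (BAdj S) b a) :
    ∃ P : Matrix ι ι ℝ, netFlow P = 0 ∧ ∀ a b, SignType.sign (P a b) = S a b := by
  have hentry : ∀ p : ι × ι, ∃ P ∈ signCone S, netFlow P = 0 ∧
      (S p.1 p.2 ≠ 0 → 1 ≤ (S p.1 p.2 : ℝ) * P p.1 p.2) := by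
    intro ⟨a, b⟩
    by_cases hab : S a b = 0
    · exact ⟨0, zero_mem _, map_zero _, fun h => absurd hab h⟩
    · obtain ⟨P, hP, hflow, hone⟩ := exists_mem_signCone_netFlow_eq_zero_one_le hcycle hab
      exact ⟨P, hP, hflow, fun _ => hone⟩
  choose P hP hflow hone using hentry
  have hsum : ∑ p, P p ∈ signCone S := sum_mem fun p _ => hP p
  refine ⟨∑ p, P p, by simp [map_sum, hflow], fun a b => ?_⟩
  have hstrict (hab : S a b ≠ 0) : 1 ≤ (S a b : ℝ) * (∑ p, P p) a b :=
    calc 1 ≤ (S a b : ℝ) * P (a, b) a b := hone (a, b) hab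
      _ ≤ ∑ p, (S a b : ℝ) * P p a b :=
        Finset.single_le_sum (f := fun p => (S a b : ℝ) * P p a b) (fun p _ => (hP p a b).1)
          (Finset.mem_univ (a, b))
      _ = (S a b : ℝ) * (∑ p, P p) a b := by rw [Matrix.sum_apply, Finset.mul_sum]
  rcases h : S a b
  · simp [(hsum a b).2 h]
  · have := hstrict (by simp [h])
    simp only [h, SignType.neg_eq_neg_one, SignType.coe_neg_one, neg_one_mul] at this
    simp [SignType.neg_eq_neg_one, sign_neg (by linarith : (∑ p, P p) a b < 0)]
  · have := hstrict (by simp [h])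
    simp only [h, SignType.pos_eq_one, SignType.coe_one, one_mul] at this
    simp [SignType.pos_eq_one, sign_pos (by linarith : 0 < (∑ p, P p) a b)]

theorem exists_nonneg_netFlow_eq_zero_pos_iff (R : ι → ι → Prop)
    (hcycle : ∀ a b, R a b → Relation.ReflTransGen R b a) :
    ∃ P : Matrix ι ι ℝ, netFlow P = 0 ∧ (∀ a b, 0 ≤ P a b) ∧ ∀ a b, 0 < P a b ↔ R a b := by
  classical
  set S : Matrix ι ι SignType := of fun a b => if R a b then SignType.pos else 0
  have hadj : BAdj S = R := by
    ext a b
    by_cases h : R a b <;> by_cases h' : R b a <;> simp [S, BAdj, h, h']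
  obtain ⟨P, hflow, hsign⟩ := exists_netFlow_eq_zero_sign_eq S (hadj ▸ hcycle)
  have hP : ∀ a b, (0 < P a b ↔ R a b) ∧ (¬ R a b → P a b = 0) := by
    intro a b
    have hab := hsign a b
    simp only [S, of_apply] at hab
    by_cases h : R a b
    · rw [if_pos h, SignType.pos_eq_one, sign_eq_one_iff] at hab
      exact ⟨iff_of_true hab h, absurd h⟩
    · rw [if_neg h, sign_eq_zero_iff] at hab
      exact ⟨iff_of_false hab.not_gt h, fun _ => hab⟩
  exact ⟨P, hflow, fun a b => by
    by_cases h : R a b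
    exacts [((hP a b).1.2 h).le, ((hP a b).2 h).ge], fun a b => (hP a b).1⟩

end Circulations

section Laplacian

variable {ι : Type*} [Fintype ι] [DecidableEq ι]

def laplacian : Matrix ι ι ℝ →ₗ[ℝ] Matrix ι ι ℝ where
  toFun M := diagonal (M *ᵥ 1) - M
  map_add' M N := by
    rw [add_mulVec, show diagonal (M *ᵥ 1 + N *ᵥ 1) = diagonal (M *ᵥ 1) + diagonal (N *ᵥ 1) from
      (diagonal_add _ _).symm]
    abel
  map_smul' c M := by simp only [smul_mulVec, diagonal_smul, smul_sub, RingHom.id_apply]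

theorem laplacian_apply (M : Matrix ι ι ℝ) : laplacian M = diagonal (M *ᵥ 1) - M := rfl

theorem laplacian_mulVec_apply (M : Matrix ι ι ℝ) (z : ι → ℝ) (i : ι) :
    (laplacian M *ᵥ z) i = ∑ j, M i j * (z i - z j) := by
  simp only [laplacian, LinearMap.coe_mk, AddHom.coe_mk, sub_mulVec, Pi.sub_apply,
    mulVec_diagonal]
  simp only [mulVec, dotProduct, Pi.one_apply, mul_one, Finset.sum_mul, mul_sub,
    Finset.sum_sub_distrib]

theorem laplacian_mulVec_one (M : Matrix ι ι ℝ) : laplacian M *ᵥ 1 = 0 := by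
  ext i; simp [laplacian_mulVec_apply]

theorem one_vecMul_laplacian (M : Matrix ι ι ℝ) : 1 ᵥ* laplacian M = netFlow M := by
  ext i
  simp [laplacian, netFlow, vecMul_sub, vecMul_diagonal]

theorem eq_of_laplacian_mulVec_eq_zero {M : Matrix ι ι ℝ} (hM : ∀ a b, 0 ≤ M a b)
    (hconn : ∀ i j, Relation.ReflTransGen (fun a b => 0 < M a b) i j) {z : ι → ℝ}
    (hz : laplacian M *ᵥ z = 0) (i j : ι) : z i = z j := by
  obtain ⟨k, -, hk⟩ := Finset.exists_max_image Finset.univ z ⟨i, Finset.mem_univ i⟩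
  -- at a maximum of `z`, every term of `∑ b, M a b * (z a - z b) = 0` is nonnegative, hence zero
  have hstep : ∀ a b, z a = z k → 0 < M a b → z b = z k := by
    intro a b ha hab
    have hterms := (Finset.sum_eq_zero_iff_of_nonneg fun c _ =>
      mul_nonneg (hM a c) (sub_nonneg.2 (ha ▸ hk c (Finset.mem_univ c)))).1
      ((laplacian_mulVec_apply M z a).symm.trans (congrFun hz a)) b (Finset.mem_univ b)
    linarith [(mul_eq_zero.1 hterms).resolve_left hab.ne']
  have hmax : ∀ x, z x = z k := fun x => by
    induction hconn k x with
    | refl => rfl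
    | tail _ hab ih => exact hstep _ _ ih hab
  rw [hmax i, hmax j]

theorem exists_eq_smul_one_of_det_add_ne_zero {L : Matrix ι ι ℝ} (hL : L *ᵥ 1 = 0)
    (hdet : (L + vecMulVec 1 1).det ≠ 0) {z : ι → ℝ} (hz : L *ᵥ z = 0) :
    ∃ c : ℝ, z = c • 1 := by
  cases isEmpty_or_nonempty ι
  · exact ⟨0, Subsingleton.elim _ _⟩
  refine ⟨(1 ⬝ᵥ z) / Fintype.card ι, sub_eq_zero.1 (by_contra fun hne =>
    hdet (exists_mulVec_eq_zero_iff.1 ⟨_, hne, ?_⟩))⟩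
  simp only [mulVec_sub, add_mulVec, mulVec_smul, hz, hL, vecMulVec_mulVec, op_smul_eq_smul,
    zero_add, smul_smul]
  ext i
  simp

theorem det_laplacian_add_ne_zero {M : Matrix ι ι ℝ} (hM : ∀ a b, 0 ≤ M a b)
    (hconn : ∀ i j, Relation.ReflTransGen (fun a b => 0 < M a b) i j) (hflow : netFlow M = 0) :
    (laplacian M + vecMulVec 1 1).det ≠ 0 := by
  intro hdet
  obtain ⟨z, hz0, hz⟩ := exists_mulVec_eq_zero_iff.2 hdet
  obtain ⟨i, -⟩ : ∃ i, z i ≠ 0 := Function.ne_iff.1 hz0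
  have hcard : (Fintype.card ι : ℝ) ≠ 0 := Nat.cast_ne_zero.2 (@Fintype.card_ne_zero ι _ ⟨i⟩)
  have hsum : 1 ⬝ᵥ z = 0 := by
    have h := congrArg (1 ⬝ᵥ ·) hz
    rw [add_mulVec, dotProduct_add, dotProduct_mulVec, one_vecMul_laplacian, hflow,
      vecMulVec_mulVec, op_smul_eq_smul] at h
    simpa [hcard] using h
  have hlz : laplacian M *ᵥ z = 0 := by
    rwa [add_mulVec, vecMulVec_mulVec, hsum, op_smul_eq_smul, zero_smul, add_zero] at hz
  have hconst := eq_of_laplacian_mulVec_eq_zero hM hconn hlz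
  apply hz0
  ext j
  simpa [one_dotProduct, hconst _ j, hcard] using hsum

theorem eventually_det_add_smul_ne_zero {P Q : Matrix ι ι ℝ} (h : (P + Q).det ≠ 0) :
    ∀ᶠ t in 𝓝[≠] (0 : ℝ), (P + t • Q).det ≠ 0 := by
  set ψ : ℝ[X] := (P.map C + (X : ℝ[X]) • Q.map C).det
  have heval : ∀ t, ψ.eval t = (P + t • Q).det := fun t => by
    rw [← coe_evalRingHom, RingHom.map_det]
    congr
    ext
    simp only [RingHom.mapMatrix_apply, map_apply, Matrix.add_apply, Matrix.smul_apply,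
      coe_evalRingHom, eval_add, eval_C, smul_eq_mul, eval_mul, eval_X]
  have hψ : ψ ≠ 0 := fun h0 => h (by simpa [h0] using (heval 1).symm)
  filter_upwards [(finite_setOfPred_isRoot hψ).eventually_cofinite_notMem.filter_mono
    (nhdsNE_le_cofinite 0)] with t ht
  rwa [← heval]

end Laplacian

section Realization

variable {ι : Type*} [Fintype ι]

theorem exists_netFlow_eq_zero_sign_eq_rowSum_pos {A : Matrix ι ι SignType}
    (hrow : ∀ i, ∃ j, A i j = SignType.pos) {P Q : Matrix ι ι ℝ} (hP : netFlow P = 0)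
    (hPsign : ∀ a b, SignType.sign (P a b) = A a b) (hQ : netFlow Q = 0)
    (hQnonneg : ∀ a b, 0 ≤ Q a b) (hQpos : ∀ a b, 0 < Q a b ↔ A a b = SignType.pos) :
    ∃ M : Matrix ι ι ℝ, netFlow M = 0 ∧ (∀ a b, SignType.sign (M a b) = A a b) ∧
      ∀ i, 0 < (M *ᵥ 1) i := by
  have hQrow : ∀ i, 0 < (Q *ᵥ 1) i := fun i => by
    obtain ⟨j, hj⟩ := hrow i
    simpa [mulVec, dotProduct] using
      Finset.sum_pos' (fun k _ => hQnonneg i k) ⟨j, Finset.mem_univ j, (hQpos i j).2 hj⟩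
  obtain ⟨T, hT, hTrow⟩ := ((eventually_gt_atTop 0).and (eventually_all.2 fun i =>
    (tendsto_atTop_add_const_right _ ((P *ᵥ 1) i)
      (tendsto_id.atTop_mul_const (hQrow i))).eventually_gt_atTop 0)).exists
  refine ⟨T • Q + P, by simp [hP, hQ], fun a b => ?_, fun i => by
    simpa [add_mulVec, smul_mulVec] using hTrow i⟩
  have hPab := hPsign a b
  have hQab : A a b ≠ SignType.pos → Q a b = 0 := fun h =>
    le_antisymm (not_lt.1 (mt (hQpos a b).1 h)) (hQnonneg a b)
  simp only [Matrix.add_apply, Matrix.smul_apply, smul_eq_mul]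
  rcases h : A a b <;>
    simp only [h, SignType.zero_eq_zero, SignType.neg_eq_neg_one, SignType.pos_eq_one,
      sign_eq_zero_iff, sign_eq_neg_one_iff, sign_eq_one_iff] at hPab ⊢
  · simp [hPab, hQab (by simp [h])]
  · simp [hQab (by simp [h]), hPab]
  · have := (hQpos a b).2 h
    positivity

variable [DecidableEq ι]

theorem exists_netFlow_eq_zero_sign_eq_det_laplacian_add_ne_zero {A : Matrix ι ι SignType}
    {M₀ M₁ : Matrix ι ι ℝ} (h₀ : netFlow M₀ = 0)
    (h₀sign : ∀ a b, SignType.sign (M₀ a b) = A a b) (h₀row : ∀ i, 0 < (M₀ *ᵥ 1) i)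
    (h₁ : netFlow M₁ = 0) (h₁zero : ∀ a b, A a b = 0 → M₁ a b = 0)
    (h₁det : (laplacian M₁ + vecMulVec 1 1).det ≠ 0) :
    ∃ M : Matrix ι ι ℝ, netFlow M = 0 ∧ (∀ a b, SignType.sign (M a b) = A a b) ∧
      (∀ i, 0 < (M *ᵥ 1) i) ∧ (laplacian M + vecMulVec 1 1).det ≠ 0 := by
  set D := M₁ - M₀
  have hdet : ∀ᶠ t in 𝓝[≠] (0 : ℝ), (laplacian (M₀ + t • D) + vecMulVec 1 1).det ≠ 0 := by
    have := eventually_det_add_smul_ne_zero (P := laplacian M₀ + vecMulVec 1 1)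
      (Q := laplacian D) (by simpa [D, add_right_comm] using h₁det)
    simpa [map_add, map_smul, add_right_comm] using this
  have hline : ∀ c d : ℝ, Tendsto (fun t : ℝ => c + t * d) (𝓝 0) (𝓝 c) := fun c d => by
    simpa using (tendsto_const_nhds (x := c)).add ((tendsto_id (x := 𝓝 (0 : ℝ))).mul_const d)
  have hsign : ∀ᶠ t in 𝓝 (0 : ℝ), ∀ a b, SignType.sign ((M₀ + t • D) a b) = A a b :=
    eventually_all.2 fun a => eventually_all.2 fun b => by
      by_cases hab : A a b = 0
      · have : M₀ a b = 0 := sign_eq_zero_iff.1 ((h₀sign a b).trans hab)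
        refine Eventually.of_forall fun t => ?_
        simp [D, this, h₁zero a b hab, hab]
      · have hM₀ : M₀ a b ≠ 0 := fun h => hab (by rw [← h₀sign a b, h, sign_zero])
        simpa [D, h₀sign] using (hline (M₀ a b) (D a b)).eventually_sign_eq hM₀
  have hrow : ∀ᶠ t in 𝓝 (0 : ℝ), ∀ i, 0 < ((M₀ + t • D) *ᵥ 1) i :=
    eventually_all.2 fun i => by
      simpa [add_mulVec, smul_mulVec] using (hline _ ((D *ᵥ 1) i)).eventually_const_lt (h₀row i)
  obtain ⟨t, hdet_t, hsign_t, hrow_t⟩ :=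
    (hdet.and (nhdsWithin_le_nhds (hsign.and hrow))).exists
  exact ⟨M₀ + t • D, by simp [D, h₀, h₁], hsign_t, hrow_t, hdet_t⟩

end Realization

section APIrreducible

variable {n : ℕ}

theorem SPIrred.reflTransGen {S : Matrix (Fin n) (Fin n) SignType} (h : SPIrred S)
    (i j : Fin n) : Relation.ReflTransGen (fun a b => S a b ≠ 0) i j := by
  by_contra hij
  obtain ⟨a, ha, b, hb, hab⟩ := h {x | Relation.ReflTransGen (fun a b => S a b ≠ 0) i x}
    ⟨i, .refl⟩ fun huniv => hij (Set.eq_univ_iff_forall.1 huniv j)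
  exact hb (Relation.ReflTransGen.tail ha hab)

theorem APIrred.exists_circulation {A : Matrix (Fin n) (Fin n) SignType} (hAP : APIrred A)
    (hcomp : ∀ i j, ¬ SameComp A i j → A i j ≠ SignType.pos) :
    ∃ M : Matrix (Fin n) (Fin n) ℝ, netFlow M = 0 ∧ (∀ a b, SignType.sign (M a b) = A a b) ∧
      (∀ i, 0 < (M *ᵥ 1) i) ∧ (laplacian M + vecMulVec 1 1).det ≠ 0 := by
  obtain ⟨hirr, hrow, -, hBirr⟩ := hAP
  have hBA : ∀ a b, BA A a b ≠ 0 → BAdj A a b := fun a b h => by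
    by_contra h'
    exact h (if_neg h')
  obtain ⟨P, hP, hPsign⟩ := exists_netFlow_eq_zero_sign_eq A fun a b _ =>
    Relation.ReflTransGen.mono hBA _ _ (hBirr.reflTransGen b a)
  obtain ⟨Q, hQ, hQnonneg, hQpos⟩ := exists_nonneg_netFlow_eq_zero_pos_iff
    (fun a b => A a b = SignType.pos) fun a b hab => (not_not.1 fun h => hcomp a b h hab).2
  obtain ⟨M₀, hM₀, hM₀sign, hM₀row⟩ :=
    exists_netFlow_eq_zero_sign_eq_rowSum_pos hrow hP hPsign hQ hQnonneg hQpos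
  obtain ⟨R, hR, hRnonneg, hRpos⟩ := exists_nonneg_netFlow_eq_zero_pos_iff
    (fun a b => A a b ≠ 0) fun a b _ => hirr.reflTransGen b a
  exact exists_netFlow_eq_zero_sign_eq_det_laplacian_add_ne_zero hM₀ hM₀sign hM₀row hR
    (fun a b hab => le_antisymm (not_lt.1 fun h => (hRpos a b).1 h hab) (hRnonneg a b))
    (det_laplacian_add_ne_zero hRnonneg
      (fun i j => Relation.ReflTransGen.mono (fun a b => (hRpos a b).2) _ _
        (hirr.reflTransGen i j)) hR)

theorem algPos_mul_diagonal_inv {M : Matrix (Fin n) (Fin n) ℝ} (hflow : netFlow M = 0)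
    (hrow : ∀ i, 0 < (M *ᵥ 1) i) (hdet : (laplacian M + vecMulVec 1 1).det ≠ 0) :
    AlgPos (M * diagonal (M *ᵥ 1)⁻¹) := by
  have hcol : M *ᵥ 1 = 1 ᵥ* M := sub_eq_zero.1 hflow
  refine exists_aeval_pos_of_eigenvectors (μ := 1) (v := 1) hrow (fun _ => one_pos) ?_
    fun x hx => ?_
  · rw [← vecMul_vecMul, ← hcol, one_smul]
    ext j
    simp [vecMul_diagonal, (hrow j).ne']
  · have hz : laplacian M *ᵥ ((M *ᵥ 1)⁻¹ * x) = 0 := by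
      rw [← mulVec_mulVec, show diagonal (M *ᵥ 1)⁻¹ *ᵥ x = (M *ᵥ 1)⁻¹ * x from
        funext fun i => mulVec_diagonal _ _ _, one_smul] at hx
      ext i
      simp [laplacian_apply, sub_mulVec, hx, mulVec_diagonal, (hrow i).ne']
    obtain ⟨c, hc⟩ := exists_eq_smul_one_of_det_add_ne_zero (laplacian_mulVec_one M) hdet hz
    refine ⟨c, funext fun i => ?_⟩
    have hi := congrFun hc i
    simp only [Pi.mul_apply, Pi.inv_apply, Pi.smul_apply, Pi.one_apply, smul_eq_mul,
      mul_one] at hi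
    rw [Pi.smul_apply, smul_eq_mul, ← hi, inv_mul_eq_div, div_mul_cancel₀ _ (hrow i).ne']

end APIrreducible

/-- Theorem 3.16: an AP-irreducible sign pattern matrix such that `A[α,β]` contains
no `+` for any two distinct irreducible components `α, β` of `A₊` (equivalently:
every `+` entry joins two indices of the same irreducible component) allows
algebraic positivity. -/
theorem stmt17 {n : ℕ} (A : Matrix (Fin n) (Fin n) SignType)
    (hAP : APIrred A)
    (hcomp : ∀ i j, ¬ SameComp A i j → A i j ≠ SignType.pos) :
    ∃ B : Matrix (Fin n) (Fin n) ℝ,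
      (∀ i j, SignType.sign (B i j) = A i j) ∧ AlgPos B := by
  obtain ⟨M, hflow, hsign, hrow, hdet⟩ := hAP.exists_circulation hcomp
  refine ⟨M * diagonal (M *ᵥ 1)⁻¹, fun i j => ?_, algPos_mul_diagonal_inv hflow hrow hdet⟩
  rw [mul_diagonal, sign_mul, hsign, Pi.inv_apply, sign_pos (inv_pos.2 (hrow j)), mul_one]
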